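/- Let A be a finite abelian group, G a finite group, α : G → Aut(A) an action, and K = A ⋊_α G. Let R ⊆ Â be a complete set of representatives of the orbits of the G-action on Â. Then for every class function f : G → ℂ, Ind_G^K f = Σ_{σ ∈ R} Ind_{K(σ)}^K (σ⊙(Res_{G(σ)}^G f)), where K(σ) = A ⋊_α G(σ) and (σ⊙h)(a, s) = σ(a)·h(s) for h : G(σ) → ℂ. (This is the group case of Proposition 4.3: the induction of f from G to K decomposes as a sum over the orbits of G on Â.) -/

import Mathlib

/-!
Both sides are averages over the conjugates `t k t⁻¹` of `k`, and such an average does not change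
if the integrand is first averaged over a further conjugation: by `A` on the left, by `G` on the
right (where `f` being a class function lets the conjugation act on the character only). For
`x = (a, r)` the left integrand becomes `#{b | a b = α_r b} · f r`, the right one
`Σ_{σ ∈ R} |G(σ)|⁻¹ Σ_g [g r g⁻¹ ∈ G(σ)] σ(α_g a) · f r`. Since `σ ∘ α_g` runs over the orbit of `σ`,
each point being hit `|G(σ)|` times, the sum over representatives is `Σ_{τ ∈ Â, τ ∘ α_r = τ} τ a`,
and orthogonality of characters evaluates this as the number of `b` with `a b = α_r b`.
-/

namespace Stmt16

open scoped Classical in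
/-- The function induced from a subgroup `H` of a finite group `K`:
`(Ind_H^K f)(k) = (1/|H|) · Σ_{t ∈ K, t k t⁻¹ ∈ H} f (t k t⁻¹)`. -/
noncomputable def ind {K : Type*} [Group K] [Fintype K] (H : Subgroup K) (f : K → ℂ) :
    K → ℂ :=
  fun k => (1 / (Nat.card H : ℂ)) * ∑ t : K, if t * k * t⁻¹ ∈ H then f (t * k * t⁻¹) else 0

instance {A G : Type*} [Group A] [Fintype A] [Group G] [Fintype G] {α : G →* MulAut A} :
    Fintype (A ⋊[α] G) :=
  Fintype.ofEquiv (A × G)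
    { toFun := fun p => ⟨p.1, p.2⟩
      invFun := fun x => (x.left, x.right)
      left_inv := fun _ => rfl
      right_inv := fun _ => rfl }

open Finset MulAction SemidirectProduct

theorem sum_conj_conj_eq_sum_conj {K M : Type*} [Group K] [Fintype K] [AddCommMonoid M]
    (φ : K → M) (u k : K) : ∑ t, φ (u * (t * k * t⁻¹) * u⁻¹) = ∑ t, φ (t * k * t⁻¹) :=
  Fintype.sum_equiv (Equiv.mulLeft u) _ _ fun t => by simp [mul_assoc]

open scoped Classical in
theorem ind_apply_eq_sum_sum_conj {K ι : Type*} [Group K] [Fintype K] [Fintype ι] [Nonempty ι]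
    (H : Subgroup K) (φ : K → ℂ) (u : ι → K) (k : K) :
    ind H φ k = ((Nat.card H * Fintype.card ι : ℕ) : ℂ)⁻¹ * ∑ t, ∑ i,
      if u i * (t * k * t⁻¹) * (u i)⁻¹ ∈ H then φ (u i * (t * k * t⁻¹) * (u i)⁻¹) else 0 := by
  have hι : (Fintype.card ι : ℂ) ≠ 0 := Nat.cast_ne_zero.mpr Fintype.card_ne_zero
  rw [ind, sum_comm, Nat.cast_mul, mul_inv, mul_assoc, one_div]
  congr 1
  rw [eq_inv_mul_iff_mul_eq₀ hι, ← nsmul_eq_mul, ← card_univ, ← sum_const]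
  exact sum_congr rfl fun i _ =>
    (sum_conj_conj_eq_sum_conj (fun x => if x ∈ H then φ x else 0) (u i) k).symm

section OrbitSums

variable {G X : Type*} [Group G] [Fintype G] [MulAction G X]

theorem card_filter_smul_eq_card_stabilizer [DecidableEq X] {x y : X} (hy : y ∈ orbit G x) :
    #{g : G | g • x = y} = Nat.card (stabilizer G x) := by
  obtain ⟨h, rfl⟩ := hy
  rw [← Nat.card_eq_finsetCard]
  refine Nat.card_congr
    { toFun := fun g => ⟨h⁻¹ * g.1, ?_⟩
      invFun := fun s => ⟨h * s.1, ?_⟩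
      left_inv := fun g => by simp
      right_inv := fun s => by simp }
  · rw [mem_stabilizer_iff, mul_smul, (mem_filter.mp g.2).2, inv_smul_smul]
  · simp [mul_smul, mem_stabilizer_iff.mp s.2]

theorem sum_inv_card_stabilizer_mul_sum_smul {𝕜 : Type*} [DivisionRing 𝕜] [CharZero 𝕜]
    [Fintype X] (R : Finset X) (hR : ∀ y, ∃! x, x ∈ R ∧ y ∈ orbit G x) (F : X → 𝕜) :
    ∑ x ∈ R, (Nat.card (stabilizer G x) : 𝕜)⁻¹ * ∑ g : G, F (g • x) = ∑ y, F y := by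
  classical
  have hfiber (x : X) : ∑ g : G, F (g • x) = ∑ y, (#{g : G | g • x = y} : 𝕜) * F y := by
    rw [← sum_fiberwise univ (· • x)]
    refine sum_congr rfl fun y _ => ?_
    rw [sum_congr rfl fun g hg => by rw [(mem_filter.mp hg).2], sum_const, nsmul_eq_mul]
  simp_rw [hfiber, mul_sum, ← mul_assoc]
  rw [sum_comm]
  refine sum_congr rfl fun y _ => ?_
  obtain ⟨x₀, ⟨hx₀R, hyx₀⟩, huniq⟩ := hR y
  rw [sum_eq_single_of_mem x₀ hx₀R, card_filter_smul_eq_card_stabilizer hyx₀,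
    inv_mul_cancel₀ (Nat.cast_ne_zero.mpr Nat.card_pos.ne'), one_mul]
  intro x hxR hx
  have hyx : y ∉ orbit G x := fun hyx => hx (huniq x ⟨hxR, hyx⟩)
  rw [filter_false_of_mem fun g _ hg => hyx ⟨g, hg⟩]
  simp

end OrbitSums

section Characters

variable {A : Type*} [CommGroup A] [Fintype A]

theorem sum_coe_apply_eq_ite (χ : A →* ℂˣ) [Decidable (χ = 1)] :
    ∑ b, (χ b : ℂ) = if χ = 1 then (Fintype.card A : ℂ) else 0 := by
  have hcoe : (Units.coeHom ℂ).comp χ = 1 ↔ χ = 1 :=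
    ⟨fun h => MonoidHom.ext fun b => Units.ext (DFunLike.congr_fun h b : _), fun h => by simp [h]⟩
  simpa [hcoe] using sum_hom_units ((Units.coeHom ℂ).comp χ)

theorem sum_dual_coe_apply_eq_ite [Fintype (A →* ℂˣ)] (c : A) [Decidable (c = 1)] :
    ∑ τ : A →* ℂˣ, (τ c : ℂ) = if c = 1 then (Fintype.card A : ℂ) else 0 := by
  split_ifs with hc
  · simp only [hc, map_one, Units.val_one, sum_const, card_univ, nsmul_eq_mul, mul_one]
    rw [Fintype.card_eq_nat_card, Fintype.card_eq_nat_card,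
      CommGroup.card_monoidHom_of_hasEnoughRootsOfUnity]
  · obtain ⟨φ, hφ⟩ := CommGroup.exists_apply_ne_one_of_hasEnoughRootsOfUnity A ℂ hc
    refine sum_hom_units_eq_zero ((Units.coeHom ℂ).comp (MonoidHom.eval c)) fun h => hφ ?_
    exact Units.ext (DFunLike.congr_fun h φ)

theorem sum_ite_comp_eq_self_coe_apply [Fintype (A →* ℂˣ)] [DecidableEq A] (φ : A →* A)
    (a : A) : ∑ τ : A →* ℂˣ, (if τ.comp φ = τ then (τ a : ℂ) else 0) = #{b | a * b = φ b} := by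
  have hA : (Fintype.card A : ℂ) ≠ 0 := Nat.cast_ne_zero.mpr Fintype.card_ne_zero
  have hterm (τ : A →* ℂˣ) : (Fintype.card A : ℂ) * (if τ.comp φ = τ then (τ a : ℂ) else 0)
      = ∑ b, (τ (a * b * (φ b)⁻¹) : ℂ) := by
    have hsplit (b : A) : (τ (a * b * (φ b)⁻¹) : ℂ) = τ a * ((τ / τ.comp φ) b : ℂˣ) := by
      simp [mul_assoc, div_eq_mul_inv]
    have hdiv : τ / τ.comp φ = 1 ↔ τ.comp φ = τ := by
      rw [eq_comm (a := τ.comp φ)]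
      exact div_eq_one (G := A →* ℂˣ)
    rw [sum_congr rfl fun b _ => hsplit b, ← mul_sum, sum_coe_apply_eq_ite]
    simp only [hdiv]
    split_ifs <;> ring
  apply mul_left_cancel₀ hA
  calc (Fintype.card A : ℂ) * ∑ τ : A →* ℂˣ, (if τ.comp φ = τ then (τ a : ℂ) else 0)
      = ∑ b, ∑ τ : A →* ℂˣ, (τ (a * b * (φ b)⁻¹) : ℂ) := by
        rw [mul_sum, sum_comm]
        exact sum_congr rfl fun τ _ => hterm τ
    _ = ∑ b, if a * b * (φ b)⁻¹ = 1 then (Fintype.card A : ℂ) else 0 :=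
        sum_congr rfl fun b _ => sum_dual_coe_apply_eq_ite _
    _ = (Fintype.card A : ℂ) * #{b | a * b = φ b} := by
        simp [mul_inv_eq_one, sum_ite, mul_comm]

end Characters

abbrev dualMulAction {A G : Type*} [MulOneClass A] [Group G] (α : G →* MulAut A) (M : Type*)
    [MulOneClass M] : MulAction G (A →* M) where
  smul g σ := σ.comp (α g⁻¹).toMonoidHom
  one_smul σ := MonoidHom.ext fun b => show σ (α 1⁻¹ b) = σ b by simp
  mul_smul g h σ := MonoidHom.ext fun b =>
    show σ (α (g * h)⁻¹ b) = σ (α h⁻¹ (α g⁻¹ b)) by simp [MulAut.mul_apply]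

open scoped Classical in
theorem sum_inv_card_mul_sum_conj_mem {A G : Type*} [CommGroup A] [Fintype A] [Group G]
    [Fintype G] [Fintype (A →* ℂˣ)] (α : G →* MulAut A) (Gσ : (A →* ℂˣ) → Subgroup G)
    (hGσ : ∀ (σ : A →* ℂˣ) (g : G), g ∈ Gσ σ ↔ ∀ b : A, σ ((α g⁻¹) b) = σ b)
    (R : Finset (A →* ℂˣ))
    (hR : ∀ τ : A →* ℂˣ, ∃! σ, σ ∈ R ∧ ∃ g : G, ∀ b : A, τ b = σ ((α g⁻¹) b)) (a : A) (r : G) :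
    ∑ σ ∈ R, (Nat.card (Gσ σ) : ℂ)⁻¹ *
        ∑ g : G, (if g * r * g⁻¹ ∈ Gσ σ then (σ (α g a) : ℂ) else 0)
      = #{b | a * b = α r b} := by
  let _ := dualMulAction α ℂˣ
  have smul_apply (g : G) (σ : A →* ℂˣ) (b : A) : (g • σ) b = σ (α g⁻¹ b) := rfl
  have hstab (σ : A →* ℂˣ) : Gσ σ = stabilizer G σ := by
    ext g
    rw [hGσ, mem_stabilizer_iff, DFunLike.ext_iff]
    rfl
  have horbit (τ : A →* ℂˣ) : ∃! σ, σ ∈ R ∧ τ ∈ orbit G σ := by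
    simpa [mem_orbit_iff, DFunLike.ext_iff, smul_apply, eq_comm] using hR τ
  have mem_stabilizer (τ : A →* ℂˣ) (s : G) :
      s ∈ stabilizer G τ ↔ τ.comp (α s).toMonoidHom = τ := by
    rw [← inv_mem_iff, mem_stabilizer_iff]
    show τ.comp (α s⁻¹⁻¹).toMonoidHom = τ ↔ _
    rw [inv_inv]
  let F (τ : A →* ℂˣ) : ℂ := if τ.comp (α r).toMonoidHom = τ then (τ a : ℂ) else 0
  have hterm (σ : A →* ℂˣ) (g : G) :
      (if g * r * g⁻¹ ∈ Gσ σ then (σ (α g a) : ℂ) else 0) = F (g⁻¹ • σ) := by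
    have hconj : g * r * g⁻¹ ∈ stabilizer G σ ↔ r ∈ stabilizer G (g⁻¹ • σ) := by
      rw [stabilizer_smul_eq_stabilizer_map_conj, Subgroup.mem_map_equiv, MulAut.conj_symm_apply,
        inv_inv]
    simp only [F, hstab, hconj, mem_stabilizer, smul_apply, inv_inv]
  calc ∑ σ ∈ R, (Nat.card (Gσ σ) : ℂ)⁻¹ *
        ∑ g : G, (if g * r * g⁻¹ ∈ Gσ σ then (σ (α g a) : ℂ) else 0)
      = ∑ σ ∈ R, (Nat.card (stabilizer G σ) : ℂ)⁻¹ * ∑ g : G, F (g • σ) := by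
        refine sum_congr rfl fun σ _ => ?_
        simp only [hterm]
        rw [hstab]
        exact congrArg _ (Fintype.sum_equiv (Equiv.inv G) _ _ fun _ => rfl)
    _ = ∑ τ, F τ := sum_inv_card_stabilizer_mul_sum_smul R horbit F
    _ = #{b | a * b = α r b} := sum_ite_comp_eq_self_coe_apply (α r).toMonoidHom a

section Semidirect

variable {A G : Type*} [CommGroup A] [Group G] (α : G →* MulAut A)

theorem mem_range_inr_iff {x : A ⋊[α] G} : x ∈ (inr : G →* A ⋊[α] G).range ↔ x.left = 1 :=
  ⟨by rintro ⟨g, rfl⟩; rfl, fun h => ⟨x.right, by ext <;> simp [h]⟩⟩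

theorem inl_mul_mul_inv (b : A) (x : A ⋊[α] G) :
    inl b * x * (inl b)⁻¹ = ⟨b * x.left * (α x.right b)⁻¹, x.right⟩ := by
  ext <;> simp

theorem inr_mul_mul_inv (g : G) (x : A ⋊[α] G) :
    inr g * x * (inr g)⁻¹ = ⟨α g x.left, g * x.right * g⁻¹⟩ := by
  ext <;> simp

theorem card_comap_rightHom [Fintype A] (H : Subgroup G) :
    Nat.card (H.comap (rightHom : A ⋊[α] G →* G)) = Nat.card H * Fintype.card A := by
  have e : H.comap (rightHom : A ⋊[α] G →* G) ≃ H × A :=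
    ((equivProd.trans (Equiv.prodComm A G)).subtypeEquiv fun _ => Iff.rfl).trans
      Equiv.prodSubtypeFstEquivSubtypeProd
  rw [Nat.card_congr e, Nat.card_prod, Nat.card_eq_fintype_card (α := A)]

variable [Fintype A] [Fintype G]

open scoped Classical in
theorem ind_range_inr_apply (f : G → ℂ) (k : A ⋊[α] G) :
    ind (inr : G →* A ⋊[α] G).range (fun x => f x.right) k
      = ((Fintype.card G * Fintype.card A : ℕ) : ℂ)⁻¹ * ∑ t : A ⋊[α] G,
          #{b | (t * k * t⁻¹).left * b = α (t * k * t⁻¹).right b} * f (t * k * t⁻¹).right := by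
  have hcard : Nat.card (inr : G →* A ⋊[α] G).range = Fintype.card G := by
    rw [Nat.card_congr (MonoidHom.ofInjective inr_injective).toEquiv.symm,
      Nat.card_eq_fintype_card]
  rw [ind_apply_eq_sum_sum_conj _ _ inl, hcard]
  congr 1
  refine sum_congr rfl fun t _ => ?_
  generalize t * k * t⁻¹ = x
  simp only [inl_mul_mul_inv, mem_range_inr_iff, mul_inv_eq_one, ← sum_filter, sum_const,
    nsmul_eq_mul, mul_comm _ x.left]

open scoped Classical in
theorem ind_comap_rightHom_apply (H : Subgroup G) (σ : A →* ℂˣ) (f : G → ℂ)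
    (hf : ∀ s t : G, f (s * t * s⁻¹) = f t) (k : A ⋊[α] G) :
    ind (H.comap (rightHom : A ⋊[α] G →* G)) (fun x => (σ x.left : ℂ) * f x.right) k
      = ((Fintype.card G * Fintype.card A : ℕ) : ℂ)⁻¹ * ∑ t : A ⋊[α] G,
          ((Nat.card H : ℂ)⁻¹ * ∑ g : G, if g * (t * k * t⁻¹).right * g⁻¹ ∈ H
            then (σ (α g (t * k * t⁻¹).left) : ℂ) else 0) * f (t * k * t⁻¹).right := by
  rw [ind_apply_eq_sum_sum_conj _ _ inr, card_comap_rightHom, mul_sum, mul_sum]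
  refine sum_congr rfl fun t _ => ?_
  generalize t * k * t⁻¹ = x
  simp only [inr_mul_mul_inv, Subgroup.mem_comap, rightHom_eq_right, hf, ← ite_zero_mul,
    ← sum_mul]
  push_cast
  ring

end Semidirect

/-- Proposition 4.3, group case: if `R ⊆ Â` is a complete set of representatives of the
orbits of the `G`-action on `Â` and `f` is a class function on `G`, then
`Ind_G^K f = Σ_{σ ∈ R} Ind_{K(σ)}^K (σ⊙(Res_{G(σ)}^G f))`, where `K = A ⋊[α] G`,
`K(σ) = A ⋊[α] G(σ)` and `(σ⊙h)(a, s) = σ(a)·h(s)`. -/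
theorem ind_from_G_decomposition {A G : Type*} [CommGroup A] [Fintype A]
    [Group G] [Fintype G] (α : G →* MulAut A)
    (Gσ : (A →* ℂˣ) → Subgroup G)
    (hGσ : ∀ (σ : A →* ℂˣ) (g : G), g ∈ Gσ σ ↔ ∀ b : A, σ ((α g⁻¹) b) = σ b)
    (R : Finset (A →* ℂˣ))
    (hR : ∀ τ : A →* ℂˣ, ∃! σ, σ ∈ R ∧ ∃ g : G, ∀ b : A, τ b = σ ((α g⁻¹) b))
    (f : G → ℂ) (hf : ∀ s t : G, f (s * t * s⁻¹) = f t) :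
    ind (SemidirectProduct.inr : G →* A ⋊[α] G).range (fun x => f x.right)
      = fun k => ∑ σ ∈ R,
          ind ((Gσ σ).comap (SemidirectProduct.rightHom : A ⋊[α] G →* G))
            (fun x => ((σ x.left : ℂˣ) : ℂ) * f x.right) k := by
  let _ : Fintype (A →* ℂˣ) := Fintype.ofFinite _
  funext k
  simp only [ind_range_inr_apply, ind_comap_rightHom_apply α _ _ f hf]
  rw [← mul_sum, sum_comm]
  congr 1
  refine sum_congr rfl fun t _ => ?_
  rw [← sum_mul, sum_inv_card_mul_sum_conj_mem α Gσ hGσ R hR]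

end Stmt16
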